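/- arXiv:2602.10563 — 2 statements merged into one kernel-verified Lean document; each statement's English description precedes it below -/
import Mathlib

section
/- Let γ > 0 and ω > 0 with γ² ≠ 4ω². Then for every E ∈ ℝ, the function t ↦ e^{−iEt} S(t) is integrable on [0,∞) and ∫₀^∞ e^{−iEt} S(t) dt = 1/(−E² + iγE + ω²). (This identifies the retarded Green function in frequency space, Ĝ(E,p) = 1/(−E² + iγE + ω_δ(p)²).) -/
/-!
The exponents `r±` are the roots of `z² + γz + ω²`, so `r₊ + r₋ = −γ`, `r₊ r₋ = ω²`, and
`(r₊ − r₋)² = γ² − 4ω² ≠ 0`. For `γ, ω > 0` both roots lie in the open left half-plane, so with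
`a = r₊ − iE`, `b = r₋ − iE` the integrand is `(e^{at} − e^{bt})/(a − b)`, whose integral over
`(0, ∞)` is `(−1/a + 1/b)/(a − b) = 1/(ab)`, and `ab = −E² + iγE + ω²` by Vieta.
-/

/-- `r₊ = (−γ + √(γ² − 4ω²))/2`, with the principal complex square root. -/
noncomputable def rPlus (γ ω : ℝ) : ℂ :=
  (-(γ : ℂ) + ((γ : ℂ) ^ 2 - 4 * (ω : ℂ) ^ 2) ^ ((1 : ℂ) / 2)) / 2

/-- `r₋ = (−γ − √(γ² − 4ω²))/2`, with the principal complex square root. -/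
noncomputable def rMinus (γ ω : ℝ) : ℂ :=
  (-(γ : ℂ) - ((γ : ℂ) ^ 2 - 4 * (ω : ℂ) ^ 2) ^ ((1 : ℂ) / 2)) / 2

/-- The kernel `S(t) = (e^{r₊ t} − e^{r₋ t})/(r₊ − r₋)`. -/
noncomputable def Sker (γ ω : ℝ) (t : ℝ) : ℂ :=
  (Complex.exp (rPlus γ ω * t) - Complex.exp (rMinus γ ω * t)) / (rPlus γ ω - rMinus γ ω)

/-- The kernel `C(t) = (r₊ e^{r₋ t} − r₋ e^{r₊ t})/(r₊ − r₋)`. -/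
noncomputable def Cker (γ ω : ℝ) (t : ℝ) : ℂ :=
  (rPlus γ ω * Complex.exp (rMinus γ ω * t) - rMinus γ ω * Complex.exp (rPlus γ ω * t)) /
    (rPlus γ ω - rMinus γ ω)

open MeasureTheory Set Complex

lemma integrableOn_exp_sub_exp_div_sub {a b : ℂ} (ha : a.re < 0) (hb : b.re < 0) :
    IntegrableOn (fun t : ℝ => (exp (a * t) - exp (b * t)) / (a - b)) (Ioi 0) :=
  ((integrableOn_exp_mul_complex_Ioi ha 0).sub (integrableOn_exp_mul_complex_Ioi hb 0)).div_const _

lemma integral_exp_sub_exp_div_sub {a b : ℂ} (ha : a.re < 0) (hb : b.re < 0) (hab : a ≠ b) :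
    ∫ t in Ioi (0 : ℝ), (exp (a * t) - exp (b * t)) / (a - b) = 1 / (a * b) := by
  have ha0 : a ≠ 0 := by rintro rfl; simp at ha
  have hb0 : b ≠ 0 := by rintro rfl; simp at hb
  rw [integral_div, integral_sub (integrableOn_exp_mul_complex_Ioi ha 0)
    (integrableOn_exp_mul_complex_Ioi hb 0), integral_exp_mul_complex_Ioi ha,
    integral_exp_mul_complex_Ioi hb]
  simp only [ofReal_zero, mul_zero, exp_zero]
  field_simp [sub_ne_zero.mpr hab]
  ring

lemma re_neg_of_sq_add_mul_add_eq_zero {z : ℂ} {b c : ℝ} (hb : 0 < b) (hc : 0 < c)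
    (hz : z ^ 2 + b * z + c = 0) : z.re < 0 := by
  have hre : z.re ^ 2 - z.im ^ 2 + b * z.re + c = 0 := by
    simpa [sq] using congrArg re hz
  have him : z.im * (2 * z.re + b) = 0 := by
    have := congrArg im hz
    simp only [sq, add_im, mul_im, ofReal_re, ofReal_im, zero_im, zero_mul, add_zero] at this
    linarith
  rcases mul_eq_zero.mp him with him | him
  · rw [him] at hre
    nlinarith
  · linarith

lemma cpow_one_div_two_sq (z : ℂ) : (z ^ ((1 : ℂ) / 2)) ^ 2 = z := by
  rw [one_div]
  exact_mod_cast cpow_nat_inv_pow z two_ne_zero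

section Roots

variable (γ ω : ℝ)

lemma rPlus_add_rMinus : rPlus γ ω + rMinus γ ω = -γ := by
  simp only [rPlus, rMinus]
  ring

lemma rPlus_mul_rMinus : rPlus γ ω * rMinus γ ω = ω ^ 2 := by
  simp only [rPlus, rMinus]
  linear_combination (-1 / 4 : ℂ) * cpow_one_div_two_sq ((γ : ℂ) ^ 2 - 4 * (ω : ℂ) ^ 2)

lemma sq_add_mul_add_eq_mul_sub_rPlus_sub_rMinus (z : ℂ) :
    z ^ 2 + γ * z + ω ^ 2 = (z - rPlus γ ω) * (z - rMinus γ ω) := by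
  linear_combination z * rPlus_add_rMinus γ ω - rPlus_mul_rMinus γ ω

variable {γ ω}

lemma rPlus_sub_rMinus_ne_zero (hne : γ ^ 2 ≠ 4 * ω ^ 2) :
    rPlus γ ω - rMinus γ ω ≠ 0 := by
  intro h
  have hdisc : (γ : ℂ) ^ 2 - 4 * (ω : ℂ) ^ 2 = 0 := by
    linear_combination (γ - (rPlus γ ω + rMinus γ ω)) * rPlus_add_rMinus γ ω
      + 4 * rPlus_mul_rMinus γ ω + (rPlus γ ω - rMinus γ ω) * h
  exact hne (by exact_mod_cast sub_eq_zero.mp hdisc)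

lemma re_rPlus_neg (hγ : 0 < γ) (hω : 0 < ω) : (rPlus γ ω).re < 0 :=
  re_neg_of_sq_add_mul_add_eq_zero hγ (pow_pos hω 2) <| by
    push_cast
    simp [sq_add_mul_add_eq_mul_sub_rPlus_sub_rMinus]

lemma re_rMinus_neg (hγ : 0 < γ) (hω : 0 < ω) : (rMinus γ ω).re < 0 :=
  re_neg_of_sq_add_mul_add_eq_zero hγ (pow_pos hω 2) <| by
    push_cast
    simp [sq_add_mul_add_eq_mul_sub_rPlus_sub_rMinus]

end Roots

lemma exp_mul_Sker (γ ω E t : ℝ) :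
    exp (-I * E * t) * Sker γ ω t =
      (exp ((rPlus γ ω - I * E) * t) - exp ((rMinus γ ω - I * E) * t)) /
        ((rPlus γ ω - I * E) - (rMinus γ ω - I * E)) := by
  rw [Sker, sub_sub_sub_cancel_right, mul_div_assoc', mul_sub, ← exp_add, ← exp_add]
  ring_nf

theorem retarded_green_function_frequency (γ ω : ℝ) (hγ : 0 < γ) (hω : 0 < ω)
    (hne : γ ^ 2 ≠ 4 * ω ^ 2) (E : ℝ) :
    MeasureTheory.IntegrableOn
        (fun t : ℝ => Complex.exp (-Complex.I * (E : ℂ) * (t : ℂ)) * Sker γ ω t)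
        (Set.Ici 0) ∧
    (∫ t in Set.Ici (0:ℝ), Complex.exp (-Complex.I * (E : ℂ) * (t : ℂ)) * Sker γ ω t)
      = 1 / (-(E : ℂ) ^ 2 + Complex.I * (γ : ℂ) * (E : ℂ) + (ω : ℂ) ^ 2) := by
  have ha : (rPlus γ ω - I * E).re < 0 := by simpa using re_rPlus_neg hγ hω
  have hb : (rMinus γ ω - I * E).re < 0 := by simpa using re_rMinus_neg hγ hω
  have hab : rPlus γ ω - I * E ≠ rMinus γ ω - I * E := fun h =>
    rPlus_sub_rMinus_ne_zero hne (sub_eq_zero.mpr (sub_left_inj.mp h))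
  have hprod : (rPlus γ ω - I * E) * (rMinus γ ω - I * E) = -E ^ 2 + I * γ * E + ω ^ 2 := by
    linear_combination rPlus_mul_rMinus γ ω - I * E * rPlus_add_rMinus γ ω + E ^ 2 * I_sq
  simp_rw [exp_mul_Sker]
  rw [integrableOn_Ici_iff_integrableOn_Ioi, integral_Ici_eq_integral_Ioi, ← hprod]
  exact ⟨integrableOn_exp_sub_exp_div_sub ha hb, integral_exp_sub_exp_div_sub ha hb hab⟩
end

section
/- Let d ≥ 1, γ > 0, B > 0, and suppose K_C, K_S : [0,∞) × ℤ^d → ℝ satisfy |K_C(t,x)| ≤ B e^{−γt/2}(1+‖x‖)^{−(d+1)} and |K_S(t,x)| ≤ B e^{−γt/2}(1+‖x‖)^{−(d+1)} for all t ≥ 0, x ∈ ℤ^d. Let f, g : ℤ^d → ℝ have finite weighted norms ‖f‖_{d+1}, ‖g‖_{d+1}, and let h : [0,∞) × ℤ^d → ℝ be such that s ↦ h(s,x) is measurable for each x and H(t) := sup_{0≤s≤t} ‖h(s,·)‖_{d+1} < ∞ for every t. Define φ(t,x) := ∑_y K_C(t,x−y) f(y) + ∑_y K_S(t,x−y) g(y)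 + ∫₀ᵗ ∑_y K_S(t−s, x−y) h(s,y) ds. Then there exists a constant A > 0 depending only on d and B such that for all t ≥ 0, ‖φ(t,·)‖_{d+1} ≤ A e^{−γt/2}( ‖f‖_{d+1} + ‖g‖_{d+1} ) + A ∫₀ᵗ e^{−γ(t−s)/2} ‖h(s,·)‖_{d+1} ds; in particular |φ(t,x)| ≤ ‖φ(t,·)‖_{d+1} (1+‖x‖)^{−(d+1)}. -/
open scoped BigOperators

/-- Euclidean norm of a lattice point `x ∈ ℤ^d` regarded as a point of `ℝ^d`. -/
noncomputable def euclNorm (d : ℕ) (x : Fin d → ℤ) : ℝ :=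
  Real.sqrt (∑ j : Fin d, ((x j : ℝ)) ^ 2)

/-- The weighted norm `‖u‖_{d+1} = sup_{x∈ℤ^d} (1+‖x‖)^{d+1} |u(x)|` of the space `𝒳_{d+1}`. -/
noncomputable def wnorm (d : ℕ) (u : (Fin d → ℤ) → ℝ) : ℝ :=
  ⨆ x : Fin d → ℤ, (1 + euclNorm d x) ^ (d + 1) * |u x|

/-- The Duhamel representation
`φ(t,x) = ∑_y K_C(t,x−y) f(y) + ∑_y K_S(t,x−y) g(y) + ∫₀ᵗ ∑_y K_S(t−s,x−y) h(s,y) ds`. -/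
noncomputable def duhamelField (d : ℕ) (KC KS : ℝ → (Fin d → ℤ) → ℝ)
    (f g : (Fin d → ℤ) → ℝ) (h : ℝ → (Fin d → ℤ) → ℝ) (t : ℝ) (x : Fin d → ℤ) : ℝ :=
  (∑' y : Fin d → ℤ, KC t (x - y) * f y) + (∑' y : Fin d → ℤ, KS t (x - y) * g y) +
    ∫ s in (0:ℝ)..t, ∑' y : Fin d → ℤ, KS (t - s) (x - y) * h s y

/-!
Write `w(x) = (1 + ‖x‖)^{d+1}`. Each of the three terms of `φ(t, ·)` is a lattice convolution
`∑_y k(x - y) u(y)` with `|k| ≤ β w⁻¹` and `|u| ≤ M w⁻¹`. By the triangle inequality and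
convexity, `w(x) ≤ 2^d (w(x - y) + w(y))`, so `w(x - y)⁻¹ w(y)⁻¹ ≤ 2^d w(x)⁻¹ (w(x - y)⁻¹ + w(y)⁻¹)`
and the convolution is bounded by `2^{d+1} (∑ w⁻¹) β M w(x)⁻¹`. The sum `∑_{ℤ^d} w⁻¹` is finite
because `w⁻¹` is dominated by a product of one-dimensional `p`-series with exponent
`1 + 1/(d+1)`. The Duhamel integral is handled by integrating the same bound in `s`.
-/

lemma summable_prod_apply_of_nonneg {α : Type*} {c : α → ℝ} (hc : Summable c)
    (hc0 : ∀ a, 0 ≤ c a) (n : ℕ) : Summable fun y : Fin n → α => ∏ j, c (y j) := by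
  induction n with
  | zero =>
    have : Finite (Fin 0 → α) := Finite.of_subsingleton
    exact .of_finite
  | succ n ih =>
    rw [← (Fin.consEquiv fun _ => α).summable_iff]
    have hcons : (fun y : Fin (n + 1) → α => ∏ j, c (y j)) ∘ Fin.consEquiv (fun _ => α) =
        fun p : α × (Fin n → α) => c p.1 * ∏ j, c (p.2 j) := by
      ext p
      simp [Fin.consEquiv, Fin.prod_univ_succ]
    rw [hcons]
    exact Summable.mul_of_nonneg (f := c) (g := fun y : Fin n → α => ∏ j, c (y j)) hc ih hc0
      fun y => Finset.prod_nonneg fun j _ => hc0 _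

lemma summable_one_add_abs_rpow_inv {q : ℝ} (hq : 1 < q) :
    Summable fun k : ℤ => ((1 + |(k : ℝ)|) ^ q)⁻¹ := by
  have hnat : Summable fun n : ℕ => ((1 + (n : ℝ)) ^ q)⁻¹ :=
    ((Real.summable_one_div_nat_add_rpow 1 q).mpr hq).congr fun n => by
      rw [one_div, add_comm, abs_of_nonneg (by positivity)]
  exact .of_nat_of_neg (by simpa using hnat) (by simpa using hnat)

section LatticeWeight

variable {d : ℕ}

lemma euclNorm_nonneg (x : Fin d → ℤ) : 0 ≤ euclNorm d x := Real.sqrt_nonneg _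

lemma euclNorm_eq_norm (x : Fin d → ℤ) :
    euclNorm d x = ‖WithLp.toLp 2 fun j => (x j : ℝ)‖ := by
  simp [euclNorm, EuclideanSpace.norm_eq, sq_abs]

lemma euclNorm_le_sub_add (x y : Fin d → ℤ) :
    euclNorm d x ≤ euclNorm d (x - y) + euclNorm d y := by
  have hsplit : (WithLp.toLp 2 fun j => (x j : ℝ)) =
      (WithLp.toLp 2 fun j => ((x - y) j : ℝ)) + WithLp.toLp 2 fun j => (y j : ℝ) := by
    ext j
    simp
  simpa only [euclNorm_eq_norm, hsplit] using norm_add_le _ _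

lemma abs_le_euclNorm (x : Fin d → ℤ) (j : Fin d) : |(x j : ℝ)| ≤ euclNorm d x := by
  rw [← Real.sqrt_sq_eq_abs]
  exact Real.sqrt_le_sqrt
    (Finset.single_le_sum (fun i _ => sq_nonneg (x i : ℝ)) (Finset.mem_univ j))

variable (d) in
noncomputable def latticeWeight (x : Fin d → ℤ) : ℝ := (1 + euclNorm d x) ^ (d + 1)

lemma latticeWeight_pos (x : Fin d → ℤ) : 0 < latticeWeight d x := by
  unfold latticeWeight; have := euclNorm_nonneg x; positivity

lemma latticeWeight_le_add (x y : Fin d → ℤ) :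
    latticeWeight d x ≤ 2 ^ d * (latticeWeight d (x - y) + latticeWeight d y) := by
  have h := euclNorm_le_sub_add x y
  calc latticeWeight d x ≤ ((1 + euclNorm d (x - y)) + (1 + euclNorm d y)) ^ (d + 1) := by
        unfold latticeWeight
        exact pow_le_pow_left₀ (by linarith [euclNorm_nonneg x]) (by linarith) _
    _ ≤ 2 ^ d * (latticeWeight d (x - y) + latticeWeight d y) :=
        add_pow_le (by linarith [euclNorm_nonneg (x - y)]) (by linarith [euclNorm_nonneg y]) _

lemma prod_one_add_abs_le (y : Fin d → ℤ) :
    ∏ j, (1 + |(y j : ℝ)|) ≤ (1 + euclNorm d y) ^ d := by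
  calc ∏ j, (1 + |(y j : ℝ)|) ≤ ∏ _j : Fin d, (1 + euclNorm d y) :=
        Finset.prod_le_prod (fun j _ => by positivity)
          fun j _ => by linarith [abs_le_euclNorm y j]
    _ = (1 + euclNorm d y) ^ d := by simp

lemma latticeWeight_inv_le_prod (y : Fin d → ℤ) :
    (latticeWeight d y)⁻¹ ≤ ∏ j, ((1 + |(y j : ℝ)|) ^ (1 + 1 / (d + 1) : ℝ))⁻¹ := by
  set q : ℝ := 1 + 1 / (d + 1)
  have hy : 1 ≤ 1 + euclNorm d y := by linarith [euclNorm_nonneg y]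
  have hP : 0 ≤ ∏ j, (1 + |(y j : ℝ)|) := Finset.prod_nonneg fun j _ => by positivity
  have hdq : (d : ℝ) * q ≤ d + 1 := by
    have : (d : ℝ) / (d + 1) ≤ 1 := (div_le_one (by positivity)).2 (by linarith)
    simp only [q, mul_add, mul_one, mul_one_div]
    linarith
  have hbound : (∏ j, (1 + |(y j : ℝ)|)) ^ q ≤ latticeWeight d y :=
    calc (∏ j, (1 + |(y j : ℝ)|)) ^ q ≤ ((1 + euclNorm d y) ^ d) ^ q := by
          gcongr
          exact prod_one_add_abs_le y
      _ = (1 + euclNorm d y) ^ ((d : ℝ) * q) := by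
          rw [← Real.rpow_natCast, ← Real.rpow_mul (by linarith)]
      _ ≤ (1 + euclNorm d y) ^ ((d + 1 : ℕ) : ℝ) :=
          Real.rpow_le_rpow_of_exponent_le hy (by push_cast; exact hdq)
      _ = latticeWeight d y := Real.rpow_natCast _ _
  rw [Finset.prod_inv_distrib, Real.finsetProd_rpow _ _ fun j _ => by positivity]
  exact inv_anti₀ (by positivity) hbound

lemma summable_latticeWeight_inv : Summable fun y : Fin d → ℤ => (latticeWeight d y)⁻¹ :=
  .of_nonneg_of_le (fun y => (inv_pos.2 (latticeWeight_pos y)).le) latticeWeight_inv_le_prod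
    (summable_prod_apply_of_nonneg
      (summable_one_add_abs_rpow_inv (lt_add_of_pos_right 1 (by positivity)))
      (fun k => by positivity) d)

end LatticeWeight

section Convolution

open Set

variable {d : ℕ}

variable (d) in
noncomputable def latticeConvConst : ℝ :=
  2 ^ (d + 1) * ∑' y : Fin d → ℤ, (latticeWeight d y)⁻¹

lemma latticeConvConst_pos : 0 < latticeConvConst d := by
  have hsum : 0 < ∑' y : Fin d → ℤ, (latticeWeight d y)⁻¹ :=
    summable_latticeWeight_inv.tsum_pos (fun y => (inv_pos.2 (latticeWeight_pos y)).le) 0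
      (inv_pos.2 (latticeWeight_pos 0))
  unfold latticeConvConst
  positivity

lemma latticeWeight_inv_mul_latticeWeight_inv_le (x y : Fin d → ℤ) :
    (latticeWeight d (x - y))⁻¹ * (latticeWeight d y)⁻¹ ≤
      2 ^ d * ((latticeWeight d (x - y))⁻¹ + (latticeWeight d y)⁻¹) * (latticeWeight d x)⁻¹ := by
  have ha := latticeWeight_pos (x - y)
  have hb := latticeWeight_pos y
  have hc := latticeWeight_pos x
  have hratio :
      1 ≤ 2 ^ d * (latticeWeight d (x - y) + latticeWeight d y) * (latticeWeight d x)⁻¹ := by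
    rw [← div_eq_mul_inv, one_le_div hc]
    exact latticeWeight_le_add x y
  calc (latticeWeight d (x - y))⁻¹ * (latticeWeight d y)⁻¹
      ≤ 2 ^ d * (latticeWeight d (x - y) + latticeWeight d y) * (latticeWeight d x)⁻¹ *
          ((latticeWeight d (x - y))⁻¹ * (latticeWeight d y)⁻¹) :=
        le_mul_of_one_le_left (by positivity) hratio
    _ = _ := by
        rw [inv_add_inv ha.ne' hb.ne']
        ring

lemma hasSum_latticeWeight_inv_sub (x : Fin d → ℤ) :
    HasSum (fun y : Fin d → ℤ => (latticeWeight d (x - y))⁻¹)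
      (∑' y : Fin d → ℤ, (latticeWeight d y)⁻¹) :=
  (Equiv.subLeft x).hasSum_iff (f := fun y => (latticeWeight d y)⁻¹) |>.2
    summable_latticeWeight_inv.hasSum

lemma summable_latticeWeight_inv_mul (x : Fin d → ℤ) :
    Summable fun y => (latticeWeight d (x - y))⁻¹ * (latticeWeight d y)⁻¹ :=
  .of_nonneg_of_le
    (fun y => mul_nonneg (inv_pos.2 (latticeWeight_pos _)).le (inv_pos.2 (latticeWeight_pos y)).le)
    (latticeWeight_inv_mul_latticeWeight_inv_le x)
    (((hasSum_latticeWeight_inv_sub x).summable.add summable_latticeWeight_inv).mul_left _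
      |>.mul_right _)

lemma tsum_latticeWeight_inv_mul_le (x : Fin d → ℤ) :
    ∑' y, (latticeWeight d (x - y))⁻¹ * (latticeWeight d y)⁻¹ ≤
      latticeConvConst d * (latticeWeight d x)⁻¹ := by
  have hmajor := ((hasSum_latticeWeight_inv_sub x).add summable_latticeWeight_inv.hasSum).mul_left
    (2 ^ d) |>.mul_right (latticeWeight d x)⁻¹
  refine (hasSum_le (latticeWeight_inv_mul_latticeWeight_inv_le x)
    (summable_latticeWeight_inv_mul x).hasSum hmajor).trans_eq ?_
  rw [latticeConvConst, pow_succ]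
  ring

lemma abs_tsum_conv_le {k u : (Fin d → ℤ) → ℝ} {β M : ℝ}
    (hk : ∀ z, |k z| ≤ β * (latticeWeight d z)⁻¹) (hu : ∀ y, |u y| ≤ M * (latticeWeight d y)⁻¹)
    (x : Fin d → ℤ) :
    |∑' y, k (x - y) * u y| ≤ latticeConvConst d * β * M * (latticeWeight d x)⁻¹ := by
  have hβ : 0 ≤ β := (mul_nonneg_iff_of_pos_right (inv_pos.2 (latticeWeight_pos 0))).1
    ((abs_nonneg _).trans (hk 0))
  have hM : 0 ≤ M := (mul_nonneg_iff_of_pos_right (inv_pos.2 (latticeWeight_pos 0))).1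
    ((abs_nonneg _).trans (hu 0))
  have hterm : ∀ y, ‖k (x - y) * u y‖ ≤
      β * M * ((latticeWeight d (x - y))⁻¹ * (latticeWeight d y)⁻¹) := fun y => by
    rw [Real.norm_eq_abs, abs_mul, mul_mul_mul_comm]
    exact mul_le_mul (hk _) (hu _) (abs_nonneg _)
      (mul_nonneg hβ (inv_pos.2 (latticeWeight_pos _)).le)
  calc |∑' y, k (x - y) * u y|
      ≤ β * M * ∑' y, (latticeWeight d (x - y))⁻¹ * (latticeWeight d y)⁻¹ :=
        tsum_of_norm_bounded ((summable_latticeWeight_inv_mul x).hasSum.mul_left _) hterm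
    _ ≤ β * M * (latticeConvConst d * (latticeWeight d x)⁻¹) := by
        gcongr
        exact tsum_latticeWeight_inv_mul_le x
    _ = latticeConvConst d * β * M * (latticeWeight d x)⁻¹ := by ring

end Convolution

section WeightedNorm

open Set MeasureTheory

variable {d : ℕ}

lemma wnorm_nonneg (u : (Fin d → ℤ) → ℝ) : 0 ≤ wnorm d u :=
  Real.iSup_nonneg fun x => by have := latticeWeight_pos x; positivity

lemma wnorm_le_of_forall_le {u : (Fin d → ℤ) → ℝ} {C : ℝ}
    (h : ∀ x, latticeWeight d x * |u x| ≤ C) : wnorm d u ≤ C :=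
  ciSup_le h

lemma abs_le_wnorm_mul_latticeWeight_inv {u : (Fin d → ℤ) → ℝ}
    (hu : BddAbove (range fun x => latticeWeight d x * |u x|)) (y : Fin d → ℤ) :
    |u y| ≤ wnorm d u * (latticeWeight d y)⁻¹ := by
  rw [← div_eq_mul_inv, le_div_iff₀' (latticeWeight_pos y)]
  exact le_ciSup hu y

lemma intervalIntegrable_wnorm {u : ℝ → (Fin d → ℤ) → ℝ} {t : ℝ} (ht : 0 ≤ t)
    (hmeas : ∀ x, Measurable fun s => u s x)
    (hbdd : BddAbove ((fun s => wnorm d (u s)) '' Icc 0 t)) :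
    IntervalIntegrable (fun s => wnorm d (u s)) volume 0 t := by
  obtain ⟨M, hM⟩ := hbdd
  refine (intervalIntegrable_const (c := M)).mono_fun' ?_ ?_
  · exact (Measurable.iSup fun x => ((hmeas x).abs.const_mul _)).aestronglyMeasurable
  · rw [uIoc_of_le ht]
    refine ae_restrict_of_forall_mem measurableSet_Ioc fun s hs => ?_
    dsimp only
    rw [Real.norm_of_nonneg (wnorm_nonneg _)]
    exact hM (mem_image_of_mem _ (Ioc_subset_Icc_self hs))

lemma abs_integral_tsum_conv_le {k u : ℝ → (Fin d → ℤ) → ℝ} {β : ℝ → ℝ} {t : ℝ} (ht : 0 ≤ t)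
    (hk : ∀ s ∈ Ioc 0 t, ∀ z, |k s z| ≤ β s * (latticeWeight d z)⁻¹)
    (hu : ∀ s ∈ Ioc 0 t, BddAbove (range fun y => latticeWeight d y * |u s y|))
    (hint : IntervalIntegrable (fun s => β s * wnorm d (u s)) volume 0 t) (x : Fin d → ℤ) :
    |∫ s in (0:ℝ)..t, ∑' y, k s (x - y) * u s y| ≤
      latticeConvConst d * (∫ s in (0:ℝ)..t, β s * wnorm d (u s)) * (latticeWeight d x)⁻¹ := by
  have hbound : ∀ s ∈ Ioc 0 t, ‖∑' y, k s (x - y) * u s y‖ ≤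
      latticeConvConst d * (latticeWeight d x)⁻¹ * (β s * wnorm d (u s)) := fun s hs =>
    (abs_tsum_conv_le (hk s hs) (abs_le_wnorm_mul_latticeWeight_inv (hu s hs)) x).trans_eq
      (by ring)
  calc |∫ s in (0:ℝ)..t, ∑' y, k s (x - y) * u s y|
      ≤ ∫ s in (0:ℝ)..t, latticeConvConst d * (latticeWeight d x)⁻¹ * (β s * wnorm d (u s)) :=
        intervalIntegral.norm_integral_le_of_norm_le ht (ae_of_all _ hbound) (hint.const_mul _)
    _ = latticeConvConst d * (∫ s in (0:ℝ)..t, β s * wnorm d (u s)) * (latticeWeight d x)⁻¹ := by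
        rw [intervalIntegral.integral_const_mul]
        ring

end WeightedNorm

theorem duhamel_weighted_estimate_general (d : ℕ) (B : ℝ) (hB : 0 < B) :
    ∃ A : ℝ, 0 < A ∧
      ∀ (γ : ℝ), 0 < γ →
      ∀ (KC KS : ℝ → (Fin d → ℤ) → ℝ),
        (∀ t : ℝ, 0 ≤ t → ∀ x : Fin d → ℤ,
          |KC t x| ≤ B * Real.exp (-(γ * t) / 2) * ((1 + euclNorm d x) ^ (d + 1))⁻¹) →
        (∀ t : ℝ, 0 ≤ t → ∀ x : Fin d → ℤ,
          |KS t x| ≤ B * Real.exp (-(γ * t) / 2) * ((1 + euclNorm d x) ^ (d + 1))⁻¹) →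
      ∀ (f g : (Fin d → ℤ) → ℝ),
        BddAbove (Set.range fun x : Fin d → ℤ => (1 + euclNorm d x) ^ (d + 1) * |f x|) →
        BddAbove (Set.range fun x : Fin d → ℤ => (1 + euclNorm d x) ^ (d + 1) * |g x|) →
      ∀ (h : ℝ → (Fin d → ℤ) → ℝ),
        (∀ x : Fin d → ℤ, Measurable fun s : ℝ => h s x) →
        (∀ s : ℝ, 0 ≤ s →
          BddAbove (Set.range fun x : Fin d → ℤ => (1 + euclNorm d x) ^ (d + 1) * |h s x|)) →
        (∀ t : ℝ, 0 ≤ t → BddAbove ((fun s : ℝ => wnorm d (h s)) '' Set.Icc 0 t)) →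
      ∀ t : ℝ, 0 ≤ t →
        wnorm d (duhamelField d KC KS f g h t)
            ≤ A * Real.exp (-(γ * t) / 2) * (wnorm d f + wnorm d g)
              + A * ∫ s in (0:ℝ)..t, Real.exp (-(γ * (t - s)) / 2) * wnorm d (h s) ∧
        ∀ x : Fin d → ℤ,
          |duhamelField d KC KS f g h t x|
            ≤ wnorm d (duhamelField d KC KS f g h t) * ((1 + euclNorm d x) ^ (d + 1))⁻¹ := by
  refine ⟨B * latticeConvConst d, mul_pos hB latticeConvConst_pos, ?_⟩
  intro γ _ KC KS hKC hKS f g hf hg h hmeas hbd hbd2 t ht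
  set RHS := B * latticeConvConst d * Real.exp (-(γ * t) / 2) * (wnorm d f + wnorm d g)
    + B * latticeConvConst d * ∫ s in (0:ℝ)..t, Real.exp (-(γ * (t - s)) / 2) * wnorm d (h s)
  have hint : IntervalIntegrable
      (fun s => B * Real.exp (-(γ * (t - s)) / 2) * wnorm d (h s)) MeasureTheory.volume 0 t := by
    simpa only [mul_assoc] using
      ((intervalIntegrable_wnorm ht hmeas (hbd2 t ht)).continuousOn_mul
        (by fun_prop : ContinuousOn (fun s : ℝ => Real.exp (-(γ * (t - s)) / 2)) _)).const_mul B
  have hpoint : ∀ x, latticeWeight d x * |duhamelField d KC KS f g h t x| ≤ RHS := by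
    intro x
    have hC := abs_tsum_conv_le (hKC t ht) (abs_le_wnorm_mul_latticeWeight_inv hf) x
    have hS := abs_tsum_conv_le (hKS t ht) (abs_le_wnorm_mul_latticeWeight_inv hg) x
    have hI := abs_integral_tsum_conv_le ht (fun s hs => hKS (t - s) (sub_nonneg.2 hs.2))
      (fun s hs => hbd s hs.1.le) hint x
    rw [← le_div_iff₀' (latticeWeight_pos x), div_eq_mul_inv]
    calc |duhamelField d KC KS f g h t x| ≤ _ := abs_add_three _ _ _
      _ ≤ _ := add_le_add (add_le_add hC hS) hI
      _ = RHS * (latticeWeight d x)⁻¹ := by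
        simp only [RHS, mul_assoc, intervalIntegral.integral_const_mul]
        ring
  exact ⟨wnorm_le_of_forall_le hpoint,
    abs_le_wnorm_mul_latticeWeight_inv ⟨RHS, Set.forall_mem_range.2 hpoint⟩⟩

theorem duhamel_weighted_estimate (d : ℕ) (hd : 1 ≤ d) (B : ℝ) (hB : 0 < B) :
    ∃ A : ℝ, 0 < A ∧
      ∀ (γ : ℝ), 0 < γ →
      ∀ (KC KS : ℝ → (Fin d → ℤ) → ℝ),
        (∀ t : ℝ, 0 ≤ t → ∀ x : Fin d → ℤ,
          |KC t x| ≤ B * Real.exp (-(γ * t) / 2) * ((1 + euclNorm d x) ^ (d + 1))⁻¹) →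
        (∀ t : ℝ, 0 ≤ t → ∀ x : Fin d → ℤ,
          |KS t x| ≤ B * Real.exp (-(γ * t) / 2) * ((1 + euclNorm d x) ^ (d + 1))⁻¹) →
      ∀ (f g : (Fin d → ℤ) → ℝ),
        BddAbove (Set.range fun x : Fin d → ℤ => (1 + euclNorm d x) ^ (d + 1) * |f x|) →
        BddAbove (Set.range fun x : Fin d → ℤ => (1 + euclNorm d x) ^ (d + 1) * |g x|) →
      ∀ (h : ℝ → (Fin d → ℤ) → ℝ),
        (∀ x : Fin d → ℤ, Measurable fun s : ℝ => h s x) →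
        (∀ s : ℝ, 0 ≤ s →
          BddAbove (Set.range fun x : Fin d → ℤ => (1 + euclNorm d x) ^ (d + 1) * |h s x|)) →
        (∀ t : ℝ, 0 ≤ t → BddAbove ((fun s : ℝ => wnorm d (h s)) '' Set.Icc 0 t)) →
      ∀ t : ℝ, 0 ≤ t →
        wnorm d (duhamelField d KC KS f g h t)
            ≤ A * Real.exp (-(γ * t) / 2) * (wnorm d f + wnorm d g)
              + A * ∫ s in (0:ℝ)..t, Real.exp (-(γ * (t - s)) / 2) * wnorm d (h s) ∧
        ∀ x : Fin d → ℤ,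
          |duhamelField d KC KS f g h t x|
            ≤ wnorm d (duhamelField d KC KS f g h t) * ((1 + euclNorm d x) ^ (d + 1))⁻¹ :=
  duhamel_weighted_estimate_general d B hB
end
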